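/- Let X and Y be objects of C₂(P) with decompositions X ≅ X_r ⊕ X_c and Y ≅ Y_r ⊕ Y_c, where X_r, Y_r are radical and X_c, Y_c are contractible. Then X and Y are homotopy equivalent (X ≃ Y) if and only if X_r ≅ Y_r in C₂(P). -/

import Mathlib

open CategoryTheory

universe u

noncomputable section

variable (R : Type u) [Ring R]

structure TwoCx : Type (u + 1) where
  X1 : ModuleCat.{u} R
  X0 : ModuleCat.{u} R
  fin1 : Module.Finite R X1
  proj1 : Module.Projective R X1
  fin0 : Module.Finite R X0
  proj0 : Module.Projective R X0
  d1 : X1 ⟶ X0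
  d0 : X0 ⟶ X1
  dd1 : d1 ≫ d0 = 0
  dd0 : d0 ≫ d1 = 0

variable {R}

@[ext]
structure TwoHom (X Y : TwoCx R) : Type u where
  f1 : X.X1 ⟶ Y.X1
  f0 : X.X0 ⟶ Y.X0
  comm1 : X.d1 ≫ f0 = f1 ≫ Y.d1
  comm0 : X.d0 ≫ f1 = f0 ≫ Y.d0

instance : CategoryStruct (TwoCx R) where
  Hom := TwoHom
  id X := ⟨𝟙 X.X1, 𝟙 X.X0, by simp, by simp⟩
  comp {X Y Z} f g :=
    ⟨f.f1 ≫ g.f1, f.f0 ≫ g.f0, by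
      rw [← Category.assoc, f.comm1, Category.assoc, g.comm1, ← Category.assoc], by
      rw [← Category.assoc, f.comm0, Category.assoc, g.comm0, ← Category.assoc]⟩

@[simp] theorem id_f1 (X : TwoCx R) : TwoHom.f1 (𝟙 X) = 𝟙 X.X1 := rfl
@[simp] theorem id_f0 (X : TwoCx R) : TwoHom.f0 (𝟙 X) = 𝟙 X.X0 := rfl
@[simp] theorem comp_f1 {X Y Z : TwoCx R} (f : X ⟶ Y) (g : Y ⟶ Z) :
    TwoHom.f1 (f ≫ g) = TwoHom.f1 f ≫ TwoHom.f1 g := rfl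
@[simp] theorem comp_f0 {X Y Z : TwoCx R} (f : X ⟶ Y) (g : Y ⟶ Z) :
    TwoHom.f0 (f ≫ g) = TwoHom.f0 f ≫ TwoHom.f0 g := rfl

@[ext] theorem hom_ext {X Y : TwoCx R} {f g : X ⟶ Y}
    (h1 : TwoHom.f1 f = TwoHom.f1 g) (h0 : TwoHom.f0 f = TwoHom.f0 g) : f = g :=
  TwoHom.ext h1 h0

instance : Category (TwoCx R) where
  id_comp f := by ext <;> simp
  comp_id f := by ext <;> simp
  assoc f g h := by ext <;> simp

section HomGroup

variable {X Y : TwoCx R}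

instance : Zero (X ⟶ Y) :=
  ⟨TwoHom.mk 0 0 (by simp) (by simp)⟩

@[simp] theorem zero_f1 : TwoHom.f1 (0 : X ⟶ Y) = 0 := rfl
@[simp] theorem zero_f0 : TwoHom.f0 (0 : X ⟶ Y) = 0 := rfl

instance : Add (X ⟶ Y) :=
  ⟨fun f g => TwoHom.mk (f.f1 + g.f1) (f.f0 + g.f0)
    (by rw [Preadditive.comp_add, f.comm1, g.comm1, ← Preadditive.add_comp])
    (by rw [Preadditive.comp_add, f.comm0, g.comm0, ← Preadditive.add_comp])⟩

@[simp] theorem add_f1 (f g : X ⟶ Y) :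
    TwoHom.f1 (f + g) = TwoHom.f1 f + TwoHom.f1 g := rfl
@[simp] theorem add_f0 (f g : X ⟶ Y) :
    TwoHom.f0 (f + g) = TwoHom.f0 f + TwoHom.f0 g := rfl

instance : Neg (X ⟶ Y) :=
  ⟨fun f => TwoHom.mk (-f.f1) (-f.f0)
    (by rw [Preadditive.comp_neg, f.comm1, ← Preadditive.neg_comp])
    (by rw [Preadditive.comp_neg, f.comm0, ← Preadditive.neg_comp])⟩

@[simp] theorem neg_f1 (f : X ⟶ Y) : TwoHom.f1 (-f) = -TwoHom.f1 f := rfl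
@[simp] theorem neg_f0 (f : X ⟶ Y) : TwoHom.f0 (-f) = -TwoHom.f0 f := rfl

instance : AddCommGroup (X ⟶ Y) where
  add := (· + ·)
  zero := 0
  neg := Neg.neg
  add_assoc a b c := by ext <;> simp [add_assoc]
  zero_add a := by ext <;> simp
  add_zero a := by ext <;> simp
  add_comm a b := by ext <;> simp [add_comm]
  neg_add_cancel a := by ext <;> simp
  nsmul := nsmulRec
  zsmul := zsmulRec

@[simp] theorem sub_f1 (f g : X ⟶ Y) :
    TwoHom.f1 (f - g) = TwoHom.f1 f - TwoHom.f1 g := by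
  show TwoHom.f1 (f + -g) = _
  rw [add_f1, neg_f1, sub_eq_add_neg]

@[simp] theorem sub_f0 (f g : X ⟶ Y) :
    TwoHom.f0 (f - g) = TwoHom.f0 f - TwoHom.f0 g := by
  show TwoHom.f0 (f + -g) = _
  rw [add_f0, neg_f0, sub_eq_add_neg]

end HomGroup

instance : Preadditive (TwoCx R) where
  add_comp := by intros; ext <;> simp
  comp_add := by intros; ext <;> simp

def Homotopic {X Y : TwoCx R} (f g : X ⟶ Y) : Prop :=
  ∃ (h1 : X.X1 ⟶ Y.X0) (h0 : X.X0 ⟶ Y.X1),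
    TwoHom.f1 f - TwoHom.f1 g = h1 ≫ Y.d0 + X.d1 ≫ h0 ∧
    TwoHom.f0 f - TwoHom.f0 g = h0 ≫ Y.d1 + X.d0 ≫ h1

def Contractible (X : TwoCx R) : Prop := Homotopic (𝟙 X) (0 : X ⟶ X)

def IsHtpEquiv {X Y : TwoCx R} (f : X ⟶ Y) : Prop :=
  ∃ g : Y ⟶ X, Homotopic (f ≫ g) (𝟙 X) ∧ Homotopic (g ≫ f) (𝟙 Y)

def HtpEquiv (X Y : TwoCx R) : Prop := ∃ f : X ⟶ Y, IsHtpEquiv f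

def modRad (M : ModuleCat.{u} R) : Submodule R M :=
  sInf {N : Submodule R M | IsCoatom N}

def RadicalCx (X : TwoCx R) : Prop :=
  LinearMap.range X.d1.hom ≤ modRad X.X0 ∧ LinearMap.range X.d0.hom ≤ modRad X.X1

def dsum (X Y : TwoCx R) : TwoCx R where
  X1 := ModuleCat.of R (X.X1 × Y.X1)
  X0 := ModuleCat.of R (X.X0 × Y.X0)
  fin1 := by haveI := X.fin1; haveI := Y.fin1; exact (inferInstance : Module.Finite R (X.X1 × Y.X1))
  proj1 := by haveI := X.proj1; haveI := Y.proj1; exact (inferInstance : Module.Projective R (X.X1 × Y.X1))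
  fin0 := by haveI := X.fin0; haveI := Y.fin0; exact (inferInstance : Module.Finite R (X.X0 × Y.X0))
  proj0 := by haveI := X.proj0; haveI := Y.proj0; exact (inferInstance : Module.Projective R (X.X0 × Y.X0))
  d1 := ModuleCat.ofHom (LinearMap.prodMap X.d1.hom Y.d1.hom)
  d0 := ModuleCat.ofHom (LinearMap.prodMap X.d0.hom Y.d0.hom)
  dd1 := by
    have h1 : LinearMap.comp X.d0.hom X.d1.hom = 0 := congrArg ModuleCat.Hom.hom X.dd1
    have h2 : LinearMap.comp Y.d0.hom Y.d1.hom = 0 := congrArg ModuleCat.Hom.hom Y.dd1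
    apply ModuleCat.hom_ext
    show LinearMap.comp (LinearMap.prodMap X.d0.hom Y.d0.hom) (LinearMap.prodMap X.d1.hom Y.d1.hom) = 0
    rw [LinearMap.prodMap_comp, h1, h2, LinearMap.prodMap_zero]
  dd0 := by
    have h1 : LinearMap.comp X.d1.hom X.d0.hom = 0 := congrArg ModuleCat.Hom.hom X.dd0
    have h2 : LinearMap.comp Y.d1.hom Y.d0.hom = 0 := congrArg ModuleCat.Hom.hom Y.dd0
    apply ModuleCat.hom_ext
    show LinearMap.comp (LinearMap.prodMap X.d1.hom Y.d1.hom) (LinearMap.prodMap X.d0.hom Y.d0.hom) = 0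
    rw [LinearMap.prodMap_comp, h1, h2, LinearMap.prodMap_zero]

def kP (P : ModuleCat.{u} R) (h1 : Module.Finite R P) (h2 : Module.Projective R P) : TwoCx R :=
  ⟨P, P, h1, h2, h1, h2, 𝟙 P, 0, by simp, by simp⟩

def kS (P : ModuleCat.{u} R) (h1 : Module.Finite R P) (h2 : Module.Projective R P) : TwoCx R :=
  ⟨P, P, h1, h2, h1, h2, 0, 𝟙 P, by simp, by simp⟩

def starCx (X : TwoCx R) : TwoCx R :=
  ⟨X.X0, X.X1, X.fin0, X.proj0, X.fin1, X.proj1, -X.d0, -X.d1,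
    by simp [X.dd0], by simp [X.dd1]⟩

-- ## The homotopy category
variable (R) in
def htpRel : HomRel (TwoCx R) := fun _ _ f g => Homotopic f g

abbrev KTwo (R : Type u) [Ring R] := CategoryTheory.Quotient (htpRel R)

def KFun (R : Type u) [Ring R] : TwoCx R ⥤ KTwo R := Quotient.functor _

-- ## Short exact sequences
structure SESData (Y Z X : TwoCx R) where
  a : Y ⟶ Z
  b : Z ⟶ X
  inj1 : Function.Injective (TwoHom.f1 a)
  inj0 : Function.Injective (TwoHom.f0 a)
  surj1 : Function.Surjective (TwoHom.f1 b)
  surj0 : Function.Surjective (TwoHom.f0 b)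
  exact1 : LinearMap.range (TwoHom.f1 a).hom = LinearMap.ker (TwoHom.f1 b).hom
  exact0 : LinearMap.range (TwoHom.f0 a).hom = LinearMap.ker (TwoHom.f0 b).hom

def SESEquiv {Y X Z Z' : TwoCx R} (s : SESData Y Z X) (t : SESData Y Z' X) : Prop :=
  ∃ e : Z ≅ Z', s.a ≫ e.hom = t.a ∧ e.hom ≫ t.b = s.b

/-- The two components of a morphism `X ⟶ Y^*`, with their natural types. -/
def sf1 {X Y : TwoCx R} (f : X ⟶ starCx Y) : X.X1 →ₗ[R] Y.X0 := (TwoHom.f1 f).hom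
def sf0 {X Y : TwoCx R} (f : X ⟶ starCx Y) : X.X0 →ₗ[R] Y.X1 := (TwoHom.f0 f).hom

-- ## The middle term associated to `f : X ⟶ Y^*`
def coneCx {X Y : TwoCx R} (f : X ⟶ starCx Y) : TwoCx R where
  X1 := ModuleCat.of R (X.X1 × Y.X1)
  X0 := ModuleCat.of R (X.X0 × Y.X0)
  fin1 := by haveI := X.fin1; haveI := Y.fin1; exact (inferInstance : Module.Finite R (X.X1 × Y.X1))
  proj1 := by haveI := X.proj1; haveI := Y.proj1; exact (inferInstance : Module.Projective R (X.X1 × Y.X1))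
  fin0 := by haveI := X.fin0; haveI := Y.fin0; exact (inferInstance : Module.Finite R (X.X0 × Y.X0))
  proj0 := by haveI := X.proj0; haveI := Y.proj0; exact (inferInstance : Module.Projective R (X.X0 × Y.X0))
  d1 := ModuleCat.ofHom (LinearMap.prod (X.d1.hom ∘ₗ LinearMap.fst R X.X1 Y.X1)
    (Y.d1.hom ∘ₗ LinearMap.snd R X.X1 Y.X1 - sf1 f ∘ₗ LinearMap.fst R X.X1 Y.X1))
  d0 := ModuleCat.ofHom (LinearMap.prod (X.d0.hom ∘ₗ LinearMap.fst R X.X0 Y.X0)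
    (Y.d0.hom ∘ₗ LinearMap.snd R X.X0 Y.X0 - sf0 f ∘ₗ LinearMap.fst R X.X0 Y.X0))
  dd1 := by
    refine ModuleCat.hom_ext (LinearMap.ext fun p => Prod.ext ?_ ?_)
    · show X.d0 (X.d1 p.1) = 0
      exact DFunLike.congr_fun (congrArg ModuleCat.Hom.hom X.dd1) p.1
    · show Y.d0 (Y.d1 p.2 - sf1 f p.1) - sf0 f (X.d1 p.1) = 0
      have hY : Y.d0 (Y.d1 p.2) = 0 := DFunLike.congr_fun (congrArg ModuleCat.Hom.hom Y.dd1) p.2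
      have hc : sf0 f (X.d1 p.1) = -(Y.d0 (sf1 f p.1)) := DFunLike.congr_fun (congrArg ModuleCat.Hom.hom f.comm1) p.1
      rw [map_sub, hY, hc]
      simp
  dd0 := by
    refine ModuleCat.hom_ext (LinearMap.ext fun p => Prod.ext ?_ ?_)
    · show X.d1 (X.d0 p.1) = 0
      exact DFunLike.congr_fun (congrArg ModuleCat.Hom.hom X.dd0) p.1
    · show Y.d1 (Y.d0 p.2 - sf0 f p.1) - sf1 f (X.d0 p.1) = 0
      have hY : Y.d1 (Y.d0 p.2) = 0 := DFunLike.congr_fun (congrArg ModuleCat.Hom.hom Y.dd0) p.2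
      have hc : sf1 f (X.d0 p.1) = -(Y.d1 (sf0 f p.1)) := DFunLike.congr_fun (congrArg ModuleCat.Hom.hom f.comm0) p.1
      rw [map_sub, hY, hc]
      simp

/-- The canonical inclusion `Y ⟶ Z_f`. -/
def coneIn {X Y : TwoCx R} (f : X ⟶ starCx Y) : Y ⟶ coneCx f where
  f1 := ModuleCat.ofHom (LinearMap.inr R X.X1 Y.X1)
  f0 := ModuleCat.ofHom (LinearMap.inr R X.X0 Y.X0)
  comm1 := by
    refine ModuleCat.hom_ext (LinearMap.ext fun y => Prod.ext ?_ ?_)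
    · show (0 : X.X0) = X.d1 0
      simp
    · show Y.d1 y = Y.d1 y - sf1 f 0
      simp
  comm0 := by
    refine ModuleCat.hom_ext (LinearMap.ext fun y => Prod.ext ?_ ?_)
    · show (0 : X.X1) = X.d0 0
      simp
    · show Y.d0 y = Y.d0 y - sf0 f 0
      simp

/-- The canonical projection `Z_f ⟶ X`. -/
def coneOut {X Y : TwoCx R} (f : X ⟶ starCx Y) : coneCx f ⟶ X where
  f1 := ModuleCat.ofHom (LinearMap.fst R X.X1 Y.X1)
  f0 := ModuleCat.ofHom (LinearMap.fst R X.X0 Y.X0)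
  comm1 := ModuleCat.hom_ext (LinearMap.ext fun _ => rfl)
  comm0 := ModuleCat.hom_ext (LinearMap.ext fun _ => rfl)

/-- The canonical short exact sequence `0 ⟶ Y ⟶ Z_f ⟶ X ⟶ 0`. -/
def canonSES {X Y : TwoCx R} (f : X ⟶ starCx Y) : SESData Y (coneCx f) X where
  a := coneIn f
  b := coneOut f
  inj1 := LinearMap.inr_injective
  inj0 := LinearMap.inr_injective
  surj1 := LinearMap.fst_surjective
  surj0 := LinearMap.fst_surjective
  exact1 := LinearMap.range_inr R X.X1 Y.X1
  exact0 := LinearMap.range_inr R X.X0 Y.X0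

-- ## scalar endomorphisms
def scalarMod [Algebra ℂ R] (c : ℂ) (M : ModuleCat.{u} R) : M ⟶ M :=
  ModuleCat.ofHom
  { toFun := fun m => algebraMap ℂ R c • m
    map_add' := fun x y => smul_add _ x y
    map_smul' := fun r m => by
      simp only [RingHom.id_apply, smul_smul, Algebra.commutes] }

def scalarHom [Algebra ℂ R] (c : ℂ) (X : TwoCx R) : X ⟶ X where
  f1 := scalarMod c X.X1
  f0 := scalarMod c X.X0
  comm1 := by
    refine ModuleCat.hom_ext (LinearMap.ext fun x => ?_)
    exact (map_smul X.d1.hom (algebraMap ℂ R c) x).symm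
  comm0 := by
    refine ModuleCat.hom_ext (LinearMap.ext fun x => ?_)
    exact (map_smul X.d0.hom (algebraMap ℂ R c) x).symm

end

/-!
Homotopy is a congruence on `TwoCx R`, so a homotopy equivalence is an isomorphism in the
quotient category `KTwo R`, where a contractible summand disappears: `X ≃ Xr` and `Y ≃ Yr`.
It remains to see that a homotopy equivalence `f` between radical complexes is an isomorphism.
If `φ ∼ 𝟙` on a radical complex, then `φ - 𝟙 = d h + h d` takes values in the radical, so each
component of `φ` is surjective by Nakayama's lemma, hence bijective since the terms are
Noetherian (`A` is finite-dimensional over `ℂ`). Applied to `f ≫ g` and `g ≫ f`, this makes `f`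
split mono and epi.
-/

section Radical

variable {R : Type*} [Ring R] {M : Type*} [AddCommGroup M] [Module R M]

theorem Submodule.eq_top_of_sup_jacobson_eq_top [Module.Finite R M] {N : Submodule R M}
    (h : N ⊔ Module.jacobson R M = ⊤) : N = ⊤ := by
  by_contra hN
  obtain ⟨K, hK, hNK⟩ := (eq_top_or_exists_le_coatom N).resolve_left hN
  exact hK.1 (top_le_iff.mp (h ▸ sup_le hNK (sInf_le hK)))

theorem LinearMap.surjective_of_sub_mem_jacobson [Module.Finite R M] (φ : M →ₗ[R] M)
    (h : ∀ x, φ x - x ∈ Module.jacobson R M) : Function.Surjective φ := by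
  refine LinearMap.range_eq_top.mp (Submodule.eq_top_of_sup_jacobson_eq_top ?_)
  refine eq_top_iff.mpr fun x _ => ?_
  simpa using Submodule.sub_mem_sup (LinearMap.mem_range_self φ x) (h x)

theorem LinearMap.bijective_of_sub_mem_jacobson [IsNoetherian R M] (φ : M →ₗ[R] M)
    (h : ∀ x, φ x - x ∈ Module.jacobson R M) : Function.Bijective φ :=
  have hφ := φ.surjective_of_sub_mem_jacobson h
  ⟨IsNoetherian.injective_of_surjective_endomorphism φ hφ, hφ⟩

end Radical

theorem isNoetherianRing_of_finiteDimensional (K : Type*) {B : Type*} [Field K] [Ring B]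
    [Algebra K B] [FiniteDimensional K B] : IsNoetherianRing B :=
  isNoetherian_of_tower K inferInstance

section Homotopy

variable {R : Type u} [Ring R]

namespace Homotopic

theorem refl {X Y : TwoCx R} (f : X ⟶ Y) : Homotopic f f :=
  ⟨0, 0, by simp, by simp⟩

theorem symm {X Y : TwoCx R} {f g : X ⟶ Y} : Homotopic f g → Homotopic g f := by
  rintro ⟨h1, h0, e1, e0⟩
  refine ⟨-h1, -h0, ?_, ?_⟩
  · rw [← neg_sub, e1]; simp only [neg_add, Preadditive.neg_comp, Preadditive.comp_neg]
  · rw [← neg_sub, e0]; simp only [neg_add, Preadditive.neg_comp, Preadditive.comp_neg]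

theorem trans {X Y : TwoCx R} {f g k : X ⟶ Y} :
    Homotopic f g → Homotopic g k → Homotopic f k := by
  rintro ⟨h1, h0, e1, e0⟩ ⟨h1', h0', e1', e0'⟩
  refine ⟨h1 + h1', h0 + h0', ?_, ?_⟩
  · rw [← sub_add_sub_cancel _ (TwoHom.f1 g), e1, e1']
    simp only [Preadditive.add_comp, Preadditive.comp_add]
    abel
  · rw [← sub_add_sub_cancel _ (TwoHom.f0 g), e0, e0']
    simp only [Preadditive.add_comp, Preadditive.comp_add]
    abel

theorem comp_right {X Y Z : TwoCx R} {f g : X ⟶ Y} (c : Y ⟶ Z) :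
    Homotopic f g → Homotopic (f ≫ c) (g ≫ c) := by
  rintro ⟨h1, h0, e1, e0⟩
  refine ⟨h1 ≫ c.f0, h0 ≫ c.f1, ?_, ?_⟩
  · simp only [comp_f1, ← Preadditive.sub_comp, e1, Preadditive.add_comp, Category.assoc,
      c.comm0]
  · simp only [comp_f0, ← Preadditive.sub_comp, e0, Preadditive.add_comp, Category.assoc,
      c.comm1]

theorem comp_left {W X Y : TwoCx R} {f g : X ⟶ Y} (c : W ⟶ X) :
    Homotopic f g → Homotopic (c ≫ f) (c ≫ g) := by
  rintro ⟨h1, h0, e1, e0⟩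
  refine ⟨c.f1 ≫ h1, c.f0 ≫ h0, ?_, ?_⟩
  · simp only [comp_f1, ← Preadditive.comp_sub, e1, Preadditive.comp_add, ← Category.assoc,
      c.comm1]
  · simp only [comp_f0, ← Preadditive.comp_sub, e0, Preadditive.comp_add, ← Category.assoc,
      c.comm0]

end Homotopic

instance : Congruence (htpRel R) where
  equivalence := ⟨Homotopic.refl, Homotopic.symm, Homotopic.trans⟩
  comp_left c := Homotopic.comp_left c
  comp_right c := Homotopic.comp_right c

instance : (KFun R).Full := Quotient.full_functor _

theorem kFun_map_eq_iff {X Y : TwoCx R} (f g : X ⟶ Y) :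
    (KFun R).map f = (KFun R).map g ↔ Homotopic f g :=
  Quotient.functor_map_eq_iff _ f g

theorem htpEquiv_iff_nonempty_iso {X Y : TwoCx R} :
    HtpEquiv X Y ↔ Nonempty ((KFun R).obj X ≅ (KFun R).obj Y) := by
  constructor
  · rintro ⟨f, g, hfg, hgf⟩
    refine ⟨⟨(KFun R).map f, (KFun R).map g, ?_, ?_⟩⟩
    · rw [← Functor.map_comp, (kFun_map_eq_iff _ _).mpr hfg, CategoryTheory.Functor.map_id]
    · rw [← Functor.map_comp, (kFun_map_eq_iff _ _).mpr hgf, CategoryTheory.Functor.map_id]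
  · rintro ⟨e⟩
    refine ⟨(KFun R).preimage e.hom, (KFun R).preimage e.inv, ?_, ?_⟩
    · simp [← kFun_map_eq_iff]
    · simp [← kFun_map_eq_iff]

end Homotopy

section DirectSum

variable {R : Type u} [Ring R] (Z C : TwoCx R)

def dsumFst : dsum Z C ⟶ Z where
  f1 := ModuleCat.ofHom (LinearMap.fst R Z.X1 C.X1)
  f0 := ModuleCat.ofHom (LinearMap.fst R Z.X0 C.X0)
  comm1 := rfl
  comm0 := rfl

def dsumInl : Z ⟶ dsum Z C where
  f1 := ModuleCat.ofHom (LinearMap.inl R Z.X1 C.X1)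
  f0 := ModuleCat.ofHom (LinearMap.inl R Z.X0 C.X0)
  comm1 := ModuleCat.hom_ext (LinearMap.ext fun _ => Prod.ext rfl (map_zero C.d1.hom).symm)
  comm0 := ModuleCat.hom_ext (LinearMap.ext fun _ => Prod.ext rfl (map_zero C.d0.hom).symm)

theorem dsumInl_dsumFst : dsumInl Z C ≫ dsumFst Z C = 𝟙 Z := rfl

variable {Z C}

theorem homotopic_id_dsumFst_dsumInl (hC : Contractible C) :
    Homotopic (𝟙 (dsum Z C)) (dsumFst Z C ≫ dsumInl Z C) := by
  obtain ⟨h1, h0, e1, e0⟩ := hC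
  refine ⟨ModuleCat.ofHom (LinearMap.prodMap 0 h1.hom),
    ModuleCat.ofHom (LinearMap.prodMap 0 h0.hom), ?_, ?_⟩
  · refine ModuleCat.hom_ext (LinearMap.ext fun p => Prod.ext ?_ ?_)
    · show p.1 - p.1 = Z.d0 0 + 0
      simp
    · show p.2 - 0 = C.d0 (h1 p.2) + h0 (C.d1 p.2)
      simpa using congr(($e1).hom p.2)
  · refine ModuleCat.hom_ext (LinearMap.ext fun p => Prod.ext ?_ ?_)
    · show p.1 - p.1 = Z.d1 0 + 0
      simp
    · show p.2 - 0 = C.d1 (h0 p.2) + h1 (C.d0 p.2)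
      simpa using congr(($e0).hom p.2)

def kFunDsumIsoOfContractible (hC : Contractible C) :
    (KFun R).obj (dsum Z C) ≅ (KFun R).obj Z where
  hom := (KFun R).map (dsumFst Z C)
  inv := (KFun R).map (dsumInl Z C)
  hom_inv_id := by
    rw [← Functor.map_comp, (kFun_map_eq_iff _ _).mpr (homotopic_id_dsumFst_dsumInl hC).symm,
      CategoryTheory.Functor.map_id]
  inv_hom_id := by rw [← Functor.map_comp, dsumInl_dsumFst, CategoryTheory.Functor.map_id]

end DirectSum

section RadicalCx

variable {R : Type u} [Ring R]

theorem isIso_of_isIso_f1_f0 {X Y : TwoCx R} (f : X ⟶ Y) [IsIso f.f1] [IsIso f.f0] : IsIso f :=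
  ⟨⟨⟨inv f.f1, inv f.f0,
      by rw [IsIso.eq_inv_comp, ← Category.assoc, ← f.comm1, Category.assoc, IsIso.hom_inv_id,
        Category.comp_id],
      by rw [IsIso.eq_inv_comp, ← Category.assoc, ← f.comm0, Category.assoc, IsIso.hom_inv_id,
        Category.comp_id]⟩,
    by ext <;> simp, by ext <;> simp⟩⟩

-- `modRad M` unfolds to `Module.jacobson R M`.
theorem isIso_of_sub_mem_modRad [IsNoetherianRing R] {M : ModuleCat.{u} R}
    [Module.Finite R M] (φ : M ⟶ M) (h : ∀ x, φ x - x ∈ modRad M) : IsIso φ :=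
  have := isNoetherian_of_isNoetherianRing_of_finite R M
  (ConcreteCategory.isIso_iff_bijective φ).mpr (φ.hom.bijective_of_sub_mem_jacobson h)

theorem isIso_of_homotopic_id [IsNoetherianRing R] {X : TwoCx R} (hX : RadicalCx X) {φ : X ⟶ X}
    (hφ : Homotopic φ (𝟙 X)) : IsIso φ := by
  obtain ⟨h1, h0, e1, e0⟩ := hφ
  have := X.fin1
  have := X.fin0
  have : IsIso φ.f1 := isIso_of_sub_mem_modRad _ fun x => by
    rw [show φ.f1 x - x = X.d0 (h1 x) + h0 (X.d1 x) by simpa using congr(($e1).hom x)]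
    exact add_mem (hX.2 ⟨_, rfl⟩) (Module.le_comap_jacobson h0.hom (hX.1 ⟨x, rfl⟩))
  have : IsIso φ.f0 := isIso_of_sub_mem_modRad _ fun x => by
    rw [show φ.f0 x - x = X.d1 (h0 x) + h1 (X.d0 x) by simpa using congr(($e0).hom x)]
    exact add_mem (hX.1 ⟨_, rfl⟩) (Module.le_comap_jacobson h1.hom (hX.2 ⟨x, rfl⟩))
  exact isIso_of_isIso_f1_f0 φ

theorem nonempty_iso_of_htpEquiv [IsNoetherianRing R] {X Y : TwoCx R} (hX : RadicalCx X)
    (hY : RadicalCx Y) : HtpEquiv X Y → Nonempty (X ≅ Y) := by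
  rintro ⟨f, g, hfg, hgf⟩
  have := isIso_of_homotopic_id hX hfg
  have := isIso_of_homotopic_id hY hgf
  have : IsSplitMono f := .mk' ⟨g ≫ inv (f ≫ g), by rw [← Category.assoc, IsIso.hom_inv_id]⟩
  have : Epi f := epi_of_epi g f
  have := isIso_of_epi_of_isSplitMono f
  exact ⟨asIso f⟩

end RadicalCx

/-- If `X ≅ X_r ⊕ X_c` and `Y ≅ Y_r ⊕ Y_c` with radical parts `X_r`, `Y_r`
and contractible parts `X_c`, `Y_c`, then `X ≃ Y` iff `X_r ≅ Y_r` in `C₂(P)`. -/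
theorem statement_5 {A : Type u} [Ring A] [Algebra ℂ A] [FiniteDimensional ℂ A]
    (X Y Xr Xc Yr Yc : TwoCx Aᵐᵒᵖ)
    (hXr : RadicalCx Xr) (hXc : Contractible Xc)
    (hYr : RadicalCx Yr) (hYc : Contractible Yc)
    (hX : Nonempty (X ≅ dsum Xr Xc)) (hY : Nonempty (Y ≅ dsum Yr Yc)) :
    HtpEquiv X Y ↔ Nonempty (Xr ≅ Yr) := by
  have : IsNoetherianRing Aᵐᵒᵖ := isNoetherianRing_of_finiteDimensional ℂ
  let eX := (KFun _).mapIso hX.some ≪≫ kFunDsumIsoOfContractible hXc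
  let eY := (KFun _).mapIso hY.some ≪≫ kFunDsumIsoOfContractible hYc
  rw [htpEquiv_iff_nonempty_iso]
  constructor
  · rintro ⟨e⟩
    exact nonempty_iso_of_htpEquiv hXr hYr (htpEquiv_iff_nonempty_iso.mpr ⟨eX.symm ≪≫ e ≪≫ eY⟩)
  · rintro ⟨e⟩
    exact ⟨eX ≪≫ (KFun _).mapIso e ≪≫ eY.symm⟩
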